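/- For probes s_{ij} = a^{i·t}·b^{j·t} embedded in D = a^{r·t}·b^{m·t}, the Hamming distance between the embeddings of s_{i1 j1} and s_{i2 j2} equals (|i1 − i2| + |j1 − j2|) · t; in particular it is at least t for distinct probes, and equals t iff the index pairs are at Manhattan distance 1. -/

import Mathlib

/-!
The greedy embedding of `a^i b^j` into `a^R b^M` is explicit,
`(some a)^i none^(R-i) (some b)^j none^(M-j)`. The `a`-blocks and the `b`-blocks of two such
embeddings are aligned, and two words `x^i y^(n-i)`, `x^k y^(n-k)` with `x ≠ y` differ in exactly
`|i - k|` places.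
-/

/-- The greedy leftmost embedding of a string `s` into a supersequence `D`. -/
def emb {α : Type*} [DecidableEq α] : List α → List α → List (Option α)
  | [], _ => []
  | _ :: D, [] => none :: emb D []
  | d :: D, c :: s => if d = c then some c :: emb D s else none :: emb D (c :: s)

/-- Hamming distance between two lists (of equal length). -/
def hammingL {β : Type*} [DecidableEq β] : List β → List β → ℕ
  | x :: xs, y :: ys => (if x = y then 0 else 1) + hammingL xs ys
  | _, _ => 0

section Hamming

variable {β : Type*} [DecidableEq β]

theorem hammingL_comm (s u : List β) : hammingL s u = hammingL u s := by
  induction s generalizing u with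
  | nil => cases u <;> rfl
  | cons x s ih =>
    cases u with
    | nil => rfl
    | cons y u => simp only [hammingL, ih, eq_comm]

theorem hammingL_append {s₁ u₁ : List β} (h : s₁.length = u₁.length) (s₂ u₂ : List β) :
    hammingL (s₁ ++ s₂) (u₁ ++ u₂) = hammingL s₁ u₁ + hammingL s₂ u₂ := by
  induction s₁ generalizing u₁ with
  | nil =>
    cases u₁ with
    | nil => simp [hammingL]
    | cons => simp at h
  | cons x s₁ ih =>
    cases u₁ with
    | nil => simp at h
    | cons y u₁ =>
      simp only [List.cons_append, hammingL, ih (Nat.succ.inj h)]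
      omega

theorem hammingL_replicate (x y : β) (n : ℕ) :
    hammingL (List.replicate n x) (List.replicate n y) = if x = y then 0 else n := by
  induction n with
  | zero => simp [hammingL]
  | succ n ih =>
    simp only [List.replicate_succ, hammingL, ih]
    split <;> omega

theorem hammingL_replicate_append_replicate_of_le {x y : β} (hxy : x ≠ y) {i k n : ℕ}
    (hik : i ≤ k) (hk : k ≤ n) :
    hammingL (List.replicate i x ++ List.replicate (n - i) y)
      (List.replicate k x ++ List.replicate (n - k) y) = k - i := by
  have split_x : List.replicate k x = List.replicate i x ++ List.replicate (k - i) x := by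
    rw [← List.replicate_add, Nat.add_sub_cancel' hik]
  have split_y : List.replicate (n - i) y
      = List.replicate (k - i) y ++ List.replicate (n - k) y := by
    rw [← List.replicate_add]
    congr 1
    omega
  rw [split_x, split_y, List.append_assoc, hammingL_append (by simp),
    hammingL_append (by simp), hammingL_replicate, hammingL_replicate, hammingL_replicate]
  simp [hxy.symm]

theorem hammingL_replicate_append_replicate {x y : β} (hxy : x ≠ y) {i k n : ℕ}
    (hi : i ≤ n) (hk : k ≤ n) :
    hammingL (List.replicate i x ++ List.replicate (n - i) y)
      (List.replicate k x ++ List.replicate (n - k) y) = Nat.dist i k := by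
  rcases le_total i k with hik | hki
  · rw [hammingL_replicate_append_replicate_of_le hxy hik hk, Nat.dist_eq_sub_of_le hik]
  · rw [hammingL_comm, hammingL_replicate_append_replicate_of_le hxy hki hi,
      Nat.dist_eq_sub_of_le_right hki]

end Hamming

section Embedding

variable {α : Type*} [DecidableEq α]

theorem emb_nil_right (D : List α) : emb D [] = List.replicate D.length none := by
  induction D with
  | nil => rfl
  | cons d D ih => rw [emb, ih, List.length_cons, List.replicate_succ]

theorem emb_replicate_append_of_head?_ne {a : α} {s : List α} (h : a ∉ s.head?) (n : ℕ)
    (D : List α) :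
    emb (List.replicate n a ++ D) s = List.replicate n none ++ emb D s := by
  induction n with
  | zero => rfl
  | succ n ih =>
    cases s with
    | nil => rw [List.replicate_succ, List.cons_append, emb, ih, List.replicate_succ,
        List.cons_append]
    | cons c s =>
      have hac : a ≠ c := fun hac => h (by simp [hac])
      simp only [List.replicate_succ, List.cons_append, emb, hac, if_false, ih]

theorem emb_replicate_append_replicate_append (a : α) {i R : ℕ} (h : i ≤ R) (D s : List α) :
    emb (List.replicate R a ++ D) (List.replicate i a ++ s)
      = List.replicate i (some a) ++ emb (List.replicate (R - i) a ++ D) s := by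
  induction i generalizing R with
  | zero => rfl
  | succ i ih =>
    cases R with
    | zero => omega
    | succ R =>
      simp only [List.replicate_succ, List.cons_append, emb, if_pos,
        ih (Nat.le_of_succ_le_succ h), Nat.succ_sub_succ]

theorem emb_replicate_append_replicate {a b : α} (hab : a ≠ b) {i j R M : ℕ} (hi : i ≤ R)
    (hj : j ≤ M) :
    emb (List.replicate R a ++ List.replicate M b) (List.replicate i a ++ List.replicate j b)
      = (List.replicate i (some a) ++ List.replicate (R - i) none)
        ++ (List.replicate j (some b) ++ List.replicate (M - j) none) := by
  have hb : a ∉ (List.replicate j b).head? := by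
    rw [List.head?_replicate]
    split <;> simp [hab.symm]
  have hbb : emb (List.replicate M b) (List.replicate j b)
      = List.replicate j (some b) ++ List.replicate (M - j) none := by
    simpa [emb_nil_right] using emb_replicate_append_replicate_append b hj [] []
  rw [emb_replicate_append_replicate_append a hi, emb_replicate_append_of_head?_ne hb, hbb,
    List.append_assoc]

end Embedding

/-- For probes `s_{ij} = a^{i·t}·b^{j·t}` greedily embedded into
`D = a^{r·t}·b^{m·t}`, the Hamming distance between the embeddings of
`s_{i₁j₁}` and `s_{i₂j₂}` equals `(|i₁ − i₂| + |j₁ − j₂|)·t`. -/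
theorem stmt_18 {α : Type*} [DecidableEq α] (a b : α) (hab : a ≠ b)
    (r m t i1 i2 j1 j2 : ℕ)
    (hi1 : i1 ≤ r) (hi2 : i2 ≤ r) (hj1 : j1 ≤ m) (hj2 : j2 ≤ m) :
    hammingL
      (emb (List.replicate (r * t) a ++ List.replicate (m * t) b)
        (List.replicate (i1 * t) a ++ List.replicate (j1 * t) b))
      (emb (List.replicate (r * t) a ++ List.replicate (m * t) b)
        (List.replicate (i2 * t) a ++ List.replicate (j2 * t) b))
      = (Nat.dist i1 i2 + Nat.dist j1 j2) * t := by
  have hi1t := Nat.mul_le_mul_right t hi1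
  have hi2t := Nat.mul_le_mul_right t hi2
  have hj1t := Nat.mul_le_mul_right t hj1
  have hj2t := Nat.mul_le_mul_right t hj2
  rw [emb_replicate_append_replicate hab hi1t hj1t, emb_replicate_append_replicate hab hi2t hj2t,
    hammingL_append (by simp [Nat.add_sub_cancel' hi1t, Nat.add_sub_cancel' hi2t]),
    hammingL_replicate_append_replicate (Option.some_ne_none a) hi1t hi2t,
    hammingL_replicate_append_replicate (Option.some_ne_none b) hj1t hj2t,
    Nat.dist_mul_right, Nat.dist_mul_right, add_mul]
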